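/- arXiv:2405.01245 — 2 statements merged into one kernel-verified Lean document; each statement's English description precedes it below -/
import Mathlib

section
/- Let α ∈ (0,1). There exists C > 0 such that for every compactly supported, odd-odd symmetric θ ∈ C^{0,α}(ℝ²) and every x = (x₁,x₂) with x₁ > 0, x₂ > 0, writing Q(x) = [2x₁,∞) × [2x₂,∞) and R(x) = [2x₁,∞) × [0,∞), one has |∫_{R(x) \ Q(x)} (y₁ y₂ / |y|^{4+α}) θ(y) dy| ≤ C ‖θ‖_{C^{0,α}} log((x₁² + x₂²)/x₁²). (In particular, Q(x) may be replaced by R(x) in the u₁ velocity approximation at the cost of the same logarithmic error.) -/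
open MeasureTheory Real Set Filter
open scoped RealInnerProductSpace FourierTransform Topology

noncomputable section

/-- The plane `ℝ²` with the Euclidean norm. -/
abbrev R2 := EuclideanSpace ℝ (Fin 2)

/-- The point `(a, b)` of `ℝ²`. -/
def mk2 (a b : ℝ) : R2 := (EuclideanSpace.equiv (Fin 2) ℝ).symm ![a, b]

/-- The perpendicular vector: `(z₁, z₂)^⊥ = (z₂, -z₁)`. -/
def perp (z : R2) : R2 := mk2 (z 1) (-(z 0))

/-- The `α`-SQG kernel `K_α(z) = z^⊥ / |z|^{2+α}`. -/
def Kal (α : ℝ) (z : R2) : R2 := ‖z‖ ^ (-(2 + α)) • perp z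

/-- The `α`-SQG velocity `u = K_α ⋆ θ`, `u(x) = ∫ (x-y)^⊥/|x-y|^{2+α} θ(y) dy`. -/
def vel (α : ℝ) (θ : R2 → ℝ) (x : R2) : R2 := ∫ y, θ y • Kal α (x - y)

/-- Sup norm `‖h‖_{L^∞}` (as a supremum). -/
def supNorm (h : R2 → ℝ) : ℝ := ⨆ x, |h x|

/-- Hölder seminorm of exponent `γ`: `sup_{x ≠ y} |h x - h y| / ‖x - y‖^γ`. -/
def holderSemi (γ : ℝ) (h : R2 → ℝ) : ℝ :=
  ⨆ p : {q : R2 × R2 // q.1 ≠ q.2}, |h p.1.1 - h p.1.2| / ‖p.1.1 - p.1.2‖ ^ γ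

/-- The Hölder norm `‖h‖_{C^{0,γ}} = ‖h‖_{L^∞} + [h]_{C^{0,γ}}`. -/
def holderNorm (γ : ℝ) (h : R2 → ℝ) : ℝ := supNorm h + holderSemi γ h

/-- Membership in `C^{0,γ}(ℝ²)`: continuous, bounded, with finite Hölder seminorm. -/
def IsHolder (γ : ℝ) (h : R2 → ℝ) : Prop :=
  Continuous h ∧ ∃ C : ℝ, (∀ x, |h x| ≤ C) ∧ ∀ x y, |h x - h y| ≤ C * ‖x - y‖ ^ γ

/-- Odd-odd symmetry: `θ(x₁,x₂) = -θ(-x₁,x₂) = -θ(x₁,-x₂)`. -/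
def OddOdd (h : R2 → ℝ) : Prop :=
  ∀ x : R2, h (mk2 (-(x 0)) (x 1)) = -h x ∧ h (mk2 (x 0) (-(x 1))) = -h x

/-! ### Auxiliary calculus lemmas -/

lemma inner_int (a B : ℝ) (ha : 0 < a) (hB : 0 < B) :
    ∫ b in Ico 0 B, a * b / (a ^ 2 + b ^ 2) ^ 2 = B ^ 2 / (2 * a * (a ^ 2 + B ^ 2)) := by
  have hpos : ∀ t : ℝ, 0 < a ^ 2 + t ^ 2 := fun t => by positivity
  rw [setIntegral_congr_set Ico_ae_eq_Ioc, ← intervalIntegral.integral_of_le hB.le]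
  have hFTC : ∀ t ∈ uIcc (0:ℝ) B,
      HasDerivAt (fun b : ℝ => (-a/2) * (a ^ 2 + b ^ 2)⁻¹) (a * t / (a ^ 2 + t ^ 2) ^ 2) t := by
    intro t _
    have h1 : HasDerivAt (fun b : ℝ => a ^ 2 + b ^ 2) (2 * t) t := by
      simpa using (hasDerivAt_pow 2 t).const_add (a ^ 2)
    have h2 := (h1.inv (ne_of_gt (hpos t))).const_mul (-a/2)
    refine h2.congr_deriv ?_
    have := ne_of_gt (hpos t)
    field_simp
  rw [intervalIntegral.integral_eq_sub_of_hasDerivAt hFTC]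
  · have h0 : a ^ 2 + B ^ 2 ≠ 0 := ne_of_gt (hpos B)
    have ha' : a ≠ 0 := ne_of_gt ha
    field_simp
    ring
  · apply Continuous.intervalIntegrable
    exact (continuous_const.mul continuous_id).div (by continuity)
      fun t => ne_of_gt (by positivity : (0:ℝ) < (a^2+t^2)^2)

lemma outer_aux (A B : ℝ) (hA : 0 < A) (hB : 0 < B) :
    IntegrableOn (fun a => B ^ 2 / (2 * a * (a ^ 2 + B ^ 2))) (Ioi A) ∧
    ∫ a in Ioi A, B ^ 2 / (2 * a * (a ^ 2 + B ^ 2))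
      = (1/4) * Real.log ((A ^ 2 + B ^ 2) / A ^ 2) := by
  have hderiv : ∀ a ∈ Ici A, HasDerivAt (fun a : ℝ => (1/4) * Real.log (a ^ 2 / (a ^ 2 + B ^ 2)))
      (B ^ 2 / (2 * a * (a ^ 2 + B ^ 2))) a := by
    intro a ha
    have ha0 : 0 < a := lt_of_lt_of_le hA ha
    have hd : (0:ℝ) < a ^ 2 + B ^ 2 := by positivity
    have h1 : HasDerivAt (fun b : ℝ => b ^ 2) (2 * a) a := by simpa using hasDerivAt_pow 2 a
    have h2 : HasDerivAt (fun b : ℝ => b ^ 2 + B ^ 2) (2 * a) a := by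
      simpa using (hasDerivAt_pow 2 a).add_const (B ^ 2)
    have h3 := h1.div h2 (ne_of_gt hd)
    have h4 : a ^ 2 / (a ^ 2 + B ^ 2) ≠ 0 := by positivity
    have h5 := (h3.log h4).const_mul (1/4 : ℝ)
    refine h5.congr_deriv ?_
    have hd' : (a:ℝ) ^ 2 + B ^ 2 ≠ 0 := ne_of_gt hd
    have ha' : a ≠ 0 := ne_of_gt ha0
    simp only [Pi.div_apply]
    field_simp
    ring
  have hpos : ∀ a ∈ Ioi A, 0 ≤ B ^ 2 / (2 * a * (a ^ 2 + B ^ 2)) := by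
    intro a ha
    have : 0 < a := lt_trans hA ha
    positivity
  have hlim : Tendsto (fun a : ℝ => (1/4) * Real.log (a ^ 2 / (a ^ 2 + B ^ 2))) atTop (nhds 0) := by
    have hq : Tendsto (fun a : ℝ => a ^ 2 / (a ^ 2 + B ^ 2)) atTop (nhds 1) := by
      have h1 : Tendsto (fun a : ℝ => a ^ 2 + B ^ 2) atTop atTop :=
        tendsto_atTop_add_const_right _ _ (tendsto_pow_atTop (by norm_num))
      have h2 : Tendsto (fun a : ℝ => B ^ 2 * (a ^ 2 + B ^ 2)⁻¹) atTop (nhds 0) := by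
        simpa using h1.inv_tendsto_atTop.const_mul (B ^ 2)
      have h3 : Tendsto (fun a : ℝ => 1 - B ^ 2 * (a ^ 2 + B ^ 2)⁻¹) atTop (nhds 1) := by
        simpa using tendsto_const_nhds.sub h2
      refine h3.congr fun a => ?_
      have : a ^ 2 + B ^ 2 ≠ 0 := by positivity
      field_simp
      ring
    have h4 : Tendsto (fun a : ℝ => Real.log (a ^ 2 / (a ^ 2 + B ^ 2))) atTop (nhds 0) := by
      have := (Real.continuousAt_log one_ne_zero).tendsto.comp hq
      simpa [Function.comp_def] using this
    simpa using h4.const_mul (1/4 : ℝ)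
  refine ⟨integrableOn_Ioi_deriv_of_nonneg' hderiv hpos hlim, ?_⟩
  rw [integral_Ioi_of_hasDerivAt_of_nonneg' hderiv hpos hlim]
  have hlg : Real.log (A ^ 2 / (A ^ 2 + B ^ 2)) = - Real.log ((A ^ 2 + B ^ 2) / A ^ 2) := by
    rw [← Real.log_inv, inv_div]
  simp only [hlg]
  ring

lemma prod_aux (A B : ℝ) (hA : 0 < A) (hB : 0 < B) :
    IntegrableOn (fun p : ℝ × ℝ => p.1 * p.2 / (p.1 ^ 2 + p.2 ^ 2) ^ 2) (Ici A ×ˢ Ico 0 B) ∧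
    ∫ p in Ici A ×ˢ Ico 0 B, p.1 * p.2 / (p.1 ^ 2 + p.2 ^ 2) ^ 2
      = (1/4) * Real.log ((A ^ 2 + B ^ 2) / A ^ 2) := by
  set F : ℝ × ℝ → ℝ := fun p => p.1 * p.2 / (p.1 ^ 2 + p.2 ^ 2) ^ 2 with hF
  have hFmeas : Measurable F :=
    ((measurable_fst.mul measurable_snd).div
      (((measurable_fst.pow_const 2).add (measurable_snd.pow_const 2)).pow_const 2))
  have hint : IntegrableOn F (Ici A ×ˢ Ico 0 B) := by
    rw [IntegrableOn, Measure.volume_eq_prod, ← Measure.prod_restrict]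
    refine (integrable_prod_iff (hFmeas.aestronglyMeasurable)).2 ⟨?_, ?_⟩
    · filter_upwards [ae_restrict_mem measurableSet_Ici] with a ha
      have ha0 : 0 < a := lt_of_lt_of_le hA ha
      have hc : Continuous fun b : ℝ => F (a, b) :=
        (continuous_const.mul continuous_id).div (by continuity)
          fun t => ne_of_gt (by positivity : (0:ℝ) < (a ^ 2 + t ^ 2) ^ 2)
      exact (hc.integrableOn_Icc (a := 0) (b := B)).mono_set Ico_subset_Icc_self
    · have heq : (fun a => ∫ b in Ico 0 B, ‖F (a, b)‖)
          =ᵐ[volume.restrict (Ici A)] fun a => B ^ 2 / (2 * a * (a ^ 2 + B ^ 2)) := by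
        filter_upwards [ae_restrict_mem measurableSet_Ici] with a ha
        have ha0 : 0 < a := lt_of_lt_of_le hA ha
        rw [← inner_int a B ha0 hB]
        refine setIntegral_congr_fun measurableSet_Ico fun b hb => ?_
        have hb0 : 0 ≤ b := hb.1
        have : 0 ≤ F (a, b) := by
          simp only [hF]
          positivity
        simp [Real.norm_eq_abs, abs_of_nonneg this]
        rfl
      refine (Integrable.congr ?_ heq.symm)
      have := (outer_aux A B hA hB).1
      rwa [← integrableOn_Ici_iff_integrableOn_Ioi] at this
  refine ⟨hint, ?_⟩
  rw [Measure.volume_eq_prod] at hint ⊢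
  rw [setIntegral_prod _ hint]
  have heq2 : ∫ a in Ici A, ∫ b in Ico 0 B, F (a, b)
      = ∫ a in Ici A, B ^ 2 / (2 * a * (a ^ 2 + B ^ 2)) := by
    refine setIntegral_congr_fun measurableSet_Ici fun a ha => ?_
    exact inner_int a B (lt_of_lt_of_le hA ha) hB
  rw [heq2, integral_Ici_eq_integral_Ioi, (outer_aux A B hA hB).2]

/-! ### Coordinate and Hölder lemmas -/

lemma mk2_apply_zero (a b : ℝ) : mk2 a b 0 = a := rfl
lemma mk2_apply_one (a b : ℝ) : mk2 a b 1 = b := rfl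

lemma norm_eq_two (y : R2) : ‖y‖ = Real.sqrt (y 0 ^ 2 + y 1 ^ 2) := by
  rw [EuclideanSpace.norm_eq]
  simp [Fin.sum_univ_two, Real.norm_eq_abs, sq_abs]

lemma oddodd_zero (θ : R2 → ℝ) (hodd : OddOdd θ) (c : ℝ) : θ (mk2 c 0) = 0 := by
  have h := (hodd (mk2 c 0)).2
  rw [mk2_apply_zero, mk2_apply_one, neg_zero] at h
  linarith [h]

variable {γ : ℝ} {θ : R2 → ℝ}

lemma holderSemi_bound (hol : IsHolder γ θ) :
    ∀ a b : R2, |θ a - θ b| ≤ holderSemi γ θ * ‖a - b‖ ^ γ := by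
  obtain ⟨-, C, hC1, hC2⟩ := hol
  have hbdd : BddAbove (Set.range fun p : {q : R2 × R2 // q.1 ≠ q.2} =>
      |θ p.1.1 - θ p.1.2| / ‖p.1.1 - p.1.2‖ ^ γ) := by
    refine ⟨max C 0, ?_⟩
    rintro r ⟨p, rfl⟩
    have hne : ‖p.1.1 - p.1.2‖ ≠ 0 := by
      simpa [sub_eq_zero] using p.2
    have hpos : (0:ℝ) < ‖p.1.1 - p.1.2‖ ^ γ :=
      Real.rpow_pos_of_pos (lt_of_le_of_ne (norm_nonneg _) (Ne.symm hne)) γ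
    exact le_max_of_le_left ((div_le_iff₀ hpos).2 (hC2 _ _))
  have hnonneg : 0 ≤ holderSemi γ θ := by
    have h2 : (mk2 0 0 : R2) ≠ mk2 1 0 := by
      intro h
      have : (mk2 0 0 : R2) 0 = mk2 1 0 0 := by rw [h]
      rw [mk2_apply_zero, mk2_apply_zero] at this
      norm_num at this
    have := le_ciSup hbdd ⟨(mk2 0 0, mk2 1 0), h2⟩
    refine le_trans ?_ this
    positivity
  intro a b
  rcases eq_or_ne a b with rfl | hab
  · simp only [sub_self, abs_zero]
    positivity
  · have hpos : (0:ℝ) < ‖a - b‖ ^ γ :=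
      Real.rpow_pos_of_pos (by simpa [sub_eq_zero, norm_pos_iff] using hab) γ
    have := le_ciSup hbdd ⟨(a, b), hab⟩
    rw [div_le_iff₀ hpos] at this
    exact this

lemma supNorm_nonneg (hol : IsHolder γ θ) : 0 ≤ supNorm θ := by
  obtain ⟨-, C, hC1, hC2⟩ := hol
  have hbdd : BddAbove (Set.range fun x : R2 => |θ x|) := ⟨C, by rintro r ⟨x, rfl⟩; exact hC1 x⟩
  exact le_trans (abs_nonneg _) (le_ciSup hbdd 0)

lemma holderSemi_le_norm (hol : IsHolder γ θ) : holderSemi γ θ ≤ holderNorm γ θ := by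
  have := supNorm_nonneg hol
  unfold holderNorm
  linarith

lemma holderNorm_nonneg (hol : IsHolder γ θ) : 0 ≤ holderNorm γ θ := by
  have h1 := supNorm_nonneg hol
  have h2 : 0 ≤ holderSemi γ θ := by
    have h3 := holderSemi_bound hol (mk2 0 0) (mk2 1 0)
    have hne : (mk2 0 0 : R2) ≠ mk2 1 0 := by
      intro h
      have : (mk2 0 0 : R2) 0 = mk2 1 0 0 := by rw [h]
      rw [mk2_apply_zero, mk2_apply_zero] at this
      norm_num at this
    have hpos : (0:ℝ) < ‖(mk2 0 0 : R2) - mk2 1 0‖ ^ γ :=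
      Real.rpow_pos_of_pos (by simpa [sub_eq_zero, norm_pos_iff] using hne) γ
    nlinarith [abs_nonneg (θ (mk2 0 0) - θ (mk2 1 0))]
  unfold holderNorm
  linarith

/-- The measure-preserving identification of `R2` with `ℝ × ℝ`. -/
def E2 : R2 ≃ᵐ ℝ × ℝ :=
  (MeasurableEquiv.toLp 2 (Fin 2 → ℝ)).symm.trans MeasurableEquiv.finTwoArrow

lemma E2_measurePreserving : MeasurePreserving E2 :=
  (volume_preserving_finTwoArrow ℝ).comp (EuclideanSpace.volume_preserving_symm_measurableEquiv_toLp (Fin 2))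

lemma E2_preimage (A B : ℝ) :
    E2 ⁻¹' (Ici A ×ˢ Ico 0 B) = {y : R2 | A ≤ y 0 ∧ 0 ≤ y 1 ∧ y 1 < B} := by
  ext y
  have : E2 y = (y 0, y 1) := rfl
  simp [this, Set.mem_prod, mem_Ici, mem_Ico, Set.mem_preimage, Set.mem_setOf_eq, and_assoc]

/-- The majorant integral over the region, transferred to `R2`. -/
lemma majorant_int (A B : ℝ) (hA : 0 < A) (hB : 0 < B) :
    IntegrableOn (fun y : R2 => y 0 * y 1 / (y 0 ^ 2 + y 1 ^ 2) ^ 2)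
      {y : R2 | A ≤ y 0 ∧ 0 ≤ y 1 ∧ y 1 < B} ∧
    ∫ y in {y : R2 | A ≤ y 0 ∧ 0 ≤ y 1 ∧ y 1 < B}, y 0 * y 1 / (y 0 ^ 2 + y 1 ^ 2) ^ 2
      = (1/4) * Real.log ((A ^ 2 + B ^ 2) / A ^ 2) := by
  set F : ℝ × ℝ → ℝ := fun p => p.1 * p.2 / (p.1 ^ 2 + p.2 ^ 2) ^ 2 with hF
  have hcomp : (fun y : R2 => y 0 * y 1 / (y 0 ^ 2 + y 1 ^ 2) ^ 2) = F ∘ E2 := rfl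
  rw [← E2_preimage A B, hcomp]
  constructor
  · exact (E2_measurePreserving.integrableOn_comp_preimage E2.measurableEmbedding).2
      (prod_aux A B hA hB).1
  · have := E2_measurePreserving.setIntegral_preimage_emb E2.measurableEmbedding
      F (Ici A ×ˢ Ico 0 B)
    calc ∫ y in E2 ⁻¹' (Ici A ×ˢ Ico 0 B), (F ∘ E2) y
        = ∫ p in Ici A ×ˢ Ico 0 B, F p := this
      _ = (1/4) * Real.log ((A ^ 2 + B ^ 2) / A ^ 2) := (prod_aux A B hA hB).2

/-- The key pointwise bound on the region `{y₁ > 0, y₂ ≥ 0}`. -/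
lemma pointwise_bound {α : ℝ} (hα0 : 0 < α) (hol : IsHolder α θ) (hodd : OddOdd θ)
    (hHn : 0 ≤ holderNorm α θ)
    (y : R2) (hy0 : 0 < y 0) (hy1 : 0 ≤ y 1) :
    |y 0 * y 1 / ‖y‖ ^ (4 + α) * θ y|
      ≤ holderNorm α θ * (y 0 * y 1 / (y 0 ^ 2 + y 1 ^ 2) ^ 2) := by
  have hyne : y ≠ 0 := by
    intro h
    rw [h] at hy0
    simp at hy0
  have hn : (0:ℝ) < ‖y‖ := norm_pos_iff.2 hyne
  have hnorm2 : ‖y‖ ^ 2 = y 0 ^ 2 + y 1 ^ 2 := by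
    rw [norm_eq_two, Real.sq_sqrt (by positivity)]
  have hy1n : y 1 ≤ ‖y‖ := by nlinarith [hnorm2, hn, hy1, sq_nonneg (y 0)]
  have hr : ‖y‖ ^ (4 + α) = (y 0 ^ 2 + y 1 ^ 2) ^ 2 * ‖y‖ ^ α := by
    rw [Real.rpow_add hn]
    congr 1
    rw [show (4:ℝ) = ((4:ℕ):ℝ) by norm_num, Real.rpow_natCast, ← hnorm2]
    ring
  have hrp : (0:ℝ) < ‖y‖ ^ α := Real.rpow_pos_of_pos hn α
  have hrP : (0:ℝ) < ‖y‖ ^ (4 + α) := Real.rpow_pos_of_pos hn _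
  have hd : (0:ℝ) < (y 0 ^ 2 + y 1 ^ 2) ^ 2 := by positivity
  -- bound on θ
  have hθb : |θ y| ≤ holderNorm α θ * (y 1) ^ α := by
    have hz := oddodd_zero θ hodd (y 0)
    have h1 : |θ y| = |θ y - θ (mk2 (y 0) 0)| := by rw [hz, sub_zero]
    have h2 := holderSemi_bound hol y (mk2 (y 0) 0)
    have h3 : ‖y - mk2 (y 0) 0‖ = y 1 := by
      rw [norm_eq_two]
      have e0 : (y - mk2 (y 0) 0) 0 = 0 := by
        simp [mk2_apply_zero]
      have e1 : (y - mk2 (y 0) 0) 1 = y 1 := by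
        simp [mk2_apply_one]
      rw [e0, e1]
      rw [show (0:ℝ) ^ 2 + y 1 ^ 2 = y 1 ^ 2 by ring, Real.sqrt_sq hy1]
    rw [h1]
    calc |θ y - θ (mk2 (y 0) 0)| ≤ holderSemi α θ * ‖y - mk2 (y 0) 0‖ ^ α := h2
      _ ≤ holderNorm α θ * (y 1) ^ α := by
          rw [h3]
          exact mul_le_mul_of_nonneg_right (holderSemi_le_norm hol)
            (Real.rpow_nonneg hy1 α)
  have habs : |y 0 * y 1 / ‖y‖ ^ (4 + α) * θ y|
      = y 0 * y 1 / ‖y‖ ^ (4 + α) * |θ y| := by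
    rw [abs_mul]
    congr 1
    exact abs_of_nonneg (by positivity)
  rw [habs]
  calc y 0 * y 1 / ‖y‖ ^ (4 + α) * |θ y|
      ≤ y 0 * y 1 / ‖y‖ ^ (4 + α) * (holderNorm α θ * (y 1) ^ α) :=
        mul_le_mul_of_nonneg_left hθb (by positivity)
    _ = holderNorm α θ * (y 0 * y 1 / (y 0 ^ 2 + y 1 ^ 2) ^ 2) * ((y 1) ^ α / ‖y‖ ^ α) := by
        rw [hr]
        field_simp
    _ ≤ holderNorm α θ * (y 0 * y 1 / (y 0 ^ 2 + y 1 ^ 2) ^ 2) * 1 := by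
        refine mul_le_mul_of_nonneg_left ?_ (by positivity)
        rw [div_le_one hrp]
        exact Real.rpow_le_rpow hy1 hy1n hα0.le
    _ = holderNorm α θ * (y 0 * y 1 / (y 0 ^ 2 + y 1 ^ 2) ^ 2) := mul_one _

/-- **Replacing `Q(x)` by `R(x)` (Remark 4.3).**  For compactly supported, odd-odd symmetric
`θ ∈ C^{0,α}` and `x` in the open first quadrant, the integral of `y₁y₂/|y|^{4+α} θ(y)` over
`R(x) \ Q(x) = [2x₁,∞) × [0,2x₂)` is bounded by `C ‖θ‖_{C^{0,α}} log((x₁²+x₂²)/x₁²)`. -/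
theorem remainder_region (α : ℝ) (hα : α ∈ Set.Ioo (0:ℝ) 1) :
    ∃ C > 0, ∀ θ : R2 → ℝ, HasCompactSupport θ → IsHolder α θ → OddOdd θ →
      ∀ x : R2, 0 < x 0 → 0 < x 1 →
        |∫ y in {y : R2 | 2 * x 0 ≤ y 0 ∧ 0 ≤ y 1 ∧ y 1 < 2 * x 1},
            y 0 * y 1 / ‖y‖ ^ (4 + α) * θ y| ≤
          C * holderNorm α θ * Real.log ((x 0 ^ 2 + x 1 ^ 2) / x 0 ^ 2) := by
  obtain ⟨hα0, hα1⟩ := hα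
  refine ⟨1/4, by norm_num, ?_⟩
  intro θ hsupp hol hodd x hx0 hx1
  have hA : (0:ℝ) < 2 * x 0 := by positivity
  have hB : (0:ℝ) < 2 * x 1 := by positivity
  have hHn : 0 ≤ holderNorm α θ := holderNorm_nonneg hol
  obtain ⟨hMint, hMval⟩ := majorant_int (2 * x 0) (2 * x 1) hA hB
  have hSm : MeasurableSet {y : R2 | 2 * x 0 ≤ y 0 ∧ 0 ≤ y 1 ∧ y 1 < 2 * x 1} := by
    rw [← E2_preimage (2 * x 0) (2 * x 1)]
    exact E2.measurable (measurableSet_Ici.prod measurableSet_Ico)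
  have hlog : ((2 * x 0) ^ 2 + (2 * x 1) ^ 2) / (2 * x 0) ^ 2
      = (x 0 ^ 2 + x 1 ^ 2) / x 0 ^ 2 := by
    rw [div_eq_div_iff (by positivity) (by positivity)]
    ring
  calc |∫ y in {y : R2 | 2 * x 0 ≤ y 0 ∧ 0 ≤ y 1 ∧ y 1 < 2 * x 1},
          y 0 * y 1 / ‖y‖ ^ (4 + α) * θ y|
      ≤ ∫ y in {y : R2 | 2 * x 0 ≤ y 0 ∧ 0 ≤ y 1 ∧ y 1 < 2 * x 1},
          |y 0 * y 1 / ‖y‖ ^ (4 + α) * θ y| := by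
        have h := norm_integral_le_integral_norm
            (μ := volume.restrict {y : R2 | 2 * x 0 ≤ y 0 ∧ 0 ≤ y 1 ∧ y 1 < 2 * x 1})
            (f := fun y : R2 => y 0 * y 1 / ‖y‖ ^ (4 + α) * θ y)
        simp only [Real.norm_eq_abs] at h
        exact h
    _ ≤ ∫ y in {y : R2 | 2 * x 0 ≤ y 0 ∧ 0 ≤ y 1 ∧ y 1 < 2 * x 1},
          holderNorm α θ * (y 0 * y 1 / (y 0 ^ 2 + y 1 ^ 2) ^ 2) := by
        refine integral_mono_of_nonneg (Eventually.of_forall fun y => abs_nonneg _)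
          (hMint.const_mul _) ?_
        refine (ae_restrict_iff' hSm).2 (Eventually.of_forall fun y hy => ?_)
        have hy0 : 0 < y 0 := lt_of_lt_of_le hA hy.1
        exact pointwise_bound hα0 hol hodd (holderNorm_nonneg hol) y hy0 hy.2.1
    _ = holderNorm α θ * ∫ y in {y : R2 | 2 * x 0 ≤ y 0 ∧ 0 ≤ y 1 ∧ y 1 < 2 * x 1},
          y 0 * y 1 / (y 0 ^ 2 + y 1 ^ 2) ^ 2 := integral_const_mul _ _
    _ = holderNorm α θ * ((1/4) * Real.log (((2 * x 0) ^ 2 + (2 * x 1) ^ 2) / (2 * x 0) ^ 2)) := by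
        rw [hMval]
    _ = 1/4 * holderNorm α θ * Real.log ((x 0 ^ 2 + x 1 ^ 2) / x 0 ^ 2) := by
      rw [hlog]; ring
end
end

section
/- Let α ∈ (0,1), β ∈ (0,1/4), and let φ : ℝ² → ℝ be a smooth radial function with 1_{B(0,1/64)} ≤ φ ≤ 1_{B(0,1/32)}. For n ≥ 1 set θ^{(n)}_{0,loc}(x) = 4^{−αn} φ(4ⁿ(x₁ − 4^{−n−2}, x₂ − 4^{−n−2})), and for N ≥ n₀ ≥ 1 let θ₀^{(N)} be the odd-odd symmetric extension of Σ_{n=n₀}^{N} n^{−β} θ^{(n)}_{0,loc} from the first quadrant to ℝ². Then for every ε > 0 there exists n₀ ≥ 1 such that for all N ≥ n₀, ‖θ₀^{(N)}‖_{C^{0,α}} < ε. -/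
open MeasureTheory Real Set Filter
open scoped RealInnerProductSpace FourierTransform Topology

noncomputable section

/-- The localized bubble `θ^{(n)}_{0,loc}(x) = 4^{-αn} φ(4ⁿ(x₁ - 4^{-n-2}, x₂ - 4^{-n-2}))`. -/
def thetaLoc (α : ℝ) (φ : R2 → ℝ) (n : ℕ) (x : R2) : ℝ :=
  (4 : ℝ) ^ (-(α * (n : ℝ))) *
    φ ((4 : ℝ) ^ (n : ℕ) • (x - mk2 ((4 : ℝ) ^ (-(n : ℝ) - 2)) ((4 : ℝ) ^ (-(n : ℝ) - 2))))

/-- Odd-odd symmetric extension to `ℝ²` of a function given on the first quadrant. -/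
def oddExt (f : R2 → ℝ) (x : R2) : ℝ :=
  Real.sign (x 0) * Real.sign (x 1) * f (mk2 |x 0| |x 1|)

/-- The initial data `θ₀^{(N)}`: odd-odd extension of `Σ_{n=n₀}^N n^{-β} θ^{(n)}_{0,loc}`. -/
def thetaData (α β : ℝ) (φ : R2 → ℝ) (n₀ N : ℕ) : R2 → ℝ :=
  oddExt (fun x => ∑ n ∈ Finset.Icc n₀ N, ((n : ℝ) ^ (-β)) * thetaLoc α φ n x)

namespace InitAux

/-- The scale `4^{-n-2}` of the `n`-th bubble. -/
def sc (n : ℕ) : ℝ := (4:ℝ) ^ (-(n:ℝ) - 2)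

lemma sc_pos (n : ℕ) : 0 < sc n := Real.rpow_pos_of_pos (by norm_num) _

lemma pow_mul_sc (n : ℕ) : (4:ℝ) ^ (n:ℕ) * sc n = 1/16 := by
  rw [sc, ← Real.rpow_natCast 4 n, ← Real.rpow_add (by norm_num : (0:ℝ) < 4),
    show (n:ℝ) + (-(n:ℝ) - 2) = -2 by ring]
  rw [show (-2 : ℝ) = ((-2 : ℤ) : ℝ) by norm_num, Real.rpow_intCast]
  norm_num

lemma sc_anti {n k : ℕ} (h : n < k) : 4 * sc k ≤ sc n := by
  have h1 : sc k ≤ (4:ℝ) ^ (-(n:ℝ) - 3) := by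
    apply Real.rpow_le_rpow_of_exponent_le (by norm_num)
    have : (n:ℝ) + 1 ≤ (k:ℝ) := by exact_mod_cast h
    linarith
  have h2 : (4:ℝ) ^ (-(n:ℝ) - 3) = sc n / 4 := by
    rw [sc, show -(n:ℝ) - 3 = (-(n:ℝ) - 2) + (-1) by ring,
      Real.rpow_add (by norm_num : (0:ℝ) < 4), Real.rpow_neg_one]
    ring
  rw [h2] at h1; linarith

lemma norm_eq2 (z : R2) : ‖z‖ = Real.sqrt (z 0 ^ 2 + z 1 ^ 2) := by
  rw [EuclideanSpace.norm_eq, Fin.sum_univ_two]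
  simp [sq_abs]

lemma coord_abs_le_norm (z : R2) (i : Fin 2) : |z i| ≤ ‖z‖ := by
  rw [EuclideanSpace.norm_eq]
  rw [show |z i| = Real.sqrt (‖z i‖^2) by rw [Real.sqrt_sq_eq_abs]; simp]
  apply Real.sqrt_le_sqrt
  exact Finset.single_le_sum (f := fun j => ‖z j‖^2) (fun j _ => sq_nonneg _) (Finset.mem_univ i)

lemma bubble_mem {α : ℝ} {φ : R2 → ℝ} (hout : ∀ x : R2, 1/32 ≤ ‖x‖ → φ x = 0)
    {n : ℕ} {X : R2} (h : thetaLoc α φ n X ≠ 0) (i : Fin 2) :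
    sc n / 2 < X i ∧ X i < 3 * sc n / 2 := by
  have hφ : φ ((4 : ℝ) ^ (n : ℕ) • (X - mk2 (sc n) (sc n))) ≠ 0 := by
    intro h0
    exact h (by rw [thetaLoc, show (4:ℝ) ^ (-(n:ℝ) - 2) = sc n from rfl, h0, mul_zero])
  have hz : ‖(4 : ℝ) ^ (n : ℕ) • (X - mk2 (sc n) (sc n))‖ < 1/32 := by
    by_contra hc
    exact hφ (hout _ (le_of_not_gt hc))
  have hco := (coord_abs_le_norm ((4 : ℝ) ^ (n : ℕ) • (X - mk2 (sc n) (sc n))) i).trans_lt hz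
  have hmk : (mk2 (sc n) (sc n)) i = sc n := by fin_cases i <;> rfl
  have hre : ((4 : ℝ) ^ (n : ℕ) • (X - mk2 (sc n) (sc n))) i
      = (4:ℝ) ^ (n:ℕ) * (X i - (mk2 (sc n) (sc n)) i) := rfl
  rw [hre, hmk, abs_mul, abs_of_pos (by positivity : (0:ℝ) < (4:ℝ)^(n:ℕ))] at hco
  have h4 : (0:ℝ) < (4:ℝ) ^ (n:ℕ) := by positivity
  have hlt : |X i - sc n| < sc n / 2 := by
    have hs := pow_mul_sc n
    nlinarith [abs_nonneg (X i - sc n)]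
  have := abs_lt.mp hlt
  constructor <;> linarith [this.1, this.2]

lemma bubble_sep {α : ℝ} {φ : R2 → ℝ} (hout : ∀ x : R2, 1/32 ≤ ‖x‖ → φ x = 0)
    {n k : ℕ} {X Y : R2} (hn : thetaLoc α φ n X ≠ 0) (hk : thetaLoc α φ k Y ≠ 0)
    (hne : k ≠ n) : sc n / 8 ≤ |X 0 - Y 0| := by
  have hX := bubble_mem hout hn 0
  have hY := bubble_mem hout hk 0
  rcases lt_or_gt_of_ne hne with h | h
  · -- k < n, so sc k ≥ 4 sc n, Y is much farther out
    have h4 := sc_anti h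
    have : sc n / 8 ≤ Y 0 - X 0 := by linarith [sc_pos n]
    calc sc n / 8 ≤ Y 0 - X 0 := this
      _ ≤ |Y 0 - X 0| := le_abs_self _
      _ = |X 0 - Y 0| := abs_sub_comm _ _
  · -- n < k, so sc k ≤ sc n / 4, Y is much closer in
    have h4 := sc_anti h
    have : sc n / 8 ≤ X 0 - Y 0 := by linarith [sc_pos k]
    linarith [le_abs_self (X 0 - Y 0)]

lemma sum_collapse {α β : ℝ} {φ : R2 → ℝ} (hout : ∀ x : R2, 1/32 ≤ ‖x‖ → φ x = 0)
    {n₀ N n : ℕ} (hmem : n ∈ Finset.Icc n₀ N) {X Y : R2} (hn : thetaLoc α φ n X ≠ 0)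
    (hclose : |X 0 - Y 0| < sc n / 8) :
    ∑ k ∈ Finset.Icc n₀ N, ((k : ℝ) ^ (-β)) * thetaLoc α φ k Y
      = ((n : ℝ) ^ (-β)) * thetaLoc α φ n Y := by
  apply Finset.sum_eq_single_of_mem _ hmem
  intro k hk hkn
  by_contra hc
  have hk' : thetaLoc α φ k Y ≠ 0 := fun h0 => hc (by rw [h0, mul_zero])
  exact absurd hclose (not_lt.mpr (bubble_sep hout hn hk' hkn))


lemma thetaLoc_abs_le {α : ℝ} {φ : R2 → ℝ} (hrange : ∀ x, 0 ≤ φ x ∧ φ x ≤ 1)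
    (n : ℕ) (X : R2) : |thetaLoc α φ n X| ≤ (4:ℝ) ^ (-(α * (n:ℝ))) := by
  rw [thetaLoc, abs_mul, abs_of_nonneg (Real.rpow_nonneg (by norm_num : (0:ℝ) ≤ 4) _)]
  have h := hrange ((4 : ℝ) ^ (n : ℕ) • (X - mk2 ((4:ℝ) ^ (-(n:ℝ)-2)) ((4:ℝ) ^ (-(n:ℝ)-2))))
  have habs : |φ ((4 : ℝ) ^ (n : ℕ) • (X - mk2 ((4:ℝ) ^ (-(n:ℝ)-2)) ((4:ℝ) ^ (-(n:ℝ)-2))))| ≤ 1 :=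
    abs_le.mpr ⟨by linarith [h.1], h.2⟩
  exact mul_le_of_le_one_right (Real.rpow_nonneg (by norm_num) _) habs

lemma abs_sign_le (t : ℝ) : |Real.sign t| ≤ 1 := by
  rcases lt_trichotomy t 0 with h | h | h
  · rw [Real.sign_of_neg h]; norm_num
  · rw [h, Real.sign_zero]; norm_num
  · rw [Real.sign_of_pos h]; norm_num

lemma thetaData_eq (α β : ℝ) (φ : R2 → ℝ) (n₀ N : ℕ) (x : R2) :
    thetaData α β φ n₀ N x = Real.sign (x 0) * Real.sign (x 1) *
      ∑ n ∈ Finset.Icc n₀ N, ((n : ℝ) ^ (-β)) * thetaLoc α φ n (mk2 |x 0| |x 1|) := rfl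

lemma nbeta_le {β : ℝ} (hβ : 0 ≤ β) {n₀ n : ℕ} (h1 : 1 ≤ n₀) (h : n₀ ≤ n) :
    ((n:ℝ)) ^ (-β) ≤ ((n₀:ℝ)) ^ (-β) :=
  Real.rpow_le_rpow_of_nonpos (by exact_mod_cast h1.trans_lt' zero_lt_one)
    (by exact_mod_cast h) (neg_nonpos.mpr hβ)

lemma four_le_one {α : ℝ} (hα : 0 ≤ α) (n : ℕ) : (4:ℝ) ^ (-(α * (n:ℝ))) ≤ 1 :=
  Real.rpow_le_one_of_one_le_of_nonpos (by norm_num)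
    (neg_nonpos.mpr (mul_nonneg hα (Nat.cast_nonneg n)))

lemma theta_sup {α β : ℝ} {φ : R2 → ℝ} (hα0 : 0 ≤ α) (hβ : 0 ≤ β)
    (hrange : ∀ x, 0 ≤ φ x ∧ φ x ≤ 1) (hout : ∀ x : R2, 1/32 ≤ ‖x‖ → φ x = 0)
    {n₀ N : ℕ} (h1 : 1 ≤ n₀) (x : R2) :
    |thetaData α β φ n₀ N x| ≤ ((n₀:ℝ)) ^ (-β) := by
  rw [thetaData_eq]
  set X := mk2 |x 0| |x 1| with hX
  set S := ∑ n ∈ Finset.Icc n₀ N, ((n : ℝ) ^ (-β)) * thetaLoc α φ n X with hS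
  have hn₀pos : (0:ℝ) ≤ ((n₀:ℝ)) ^ (-β) := Real.rpow_nonneg (Nat.cast_nonneg _) _
  have hbS : |S| ≤ ((n₀:ℝ)) ^ (-β) := by
    by_cases h0 : S = 0
    · rw [h0, abs_zero]; exact hn₀pos
    · obtain ⟨n, hmem, hne⟩ := Finset.exists_ne_zero_of_sum_ne_zero h0
      have hb : thetaLoc α φ n X ≠ 0 := fun h => hne (by rw [h, mul_zero])
      have hc := sum_collapse (β := β) hout hmem hb (Y := X)
        (by rw [sub_self, abs_zero]; exact div_pos (sc_pos n) (by norm_num))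
      rw [hS, hc, abs_mul, abs_of_nonneg (Real.rpow_nonneg (Nat.cast_nonneg n) _)]
      calc ((n:ℝ)) ^ (-β) * |thetaLoc α φ n X|
          ≤ ((n:ℝ)) ^ (-β) * 1 := by
            have := (thetaLoc_abs_le hrange n X).trans (four_le_one hα0 n)
            exact mul_le_mul_of_nonneg_left this (Real.rpow_nonneg (Nat.cast_nonneg n) _)
        _ ≤ ((n₀:ℝ)) ^ (-β) := by
            rw [mul_one]; exact nbeta_le hβ h1 (Finset.mem_Icc.mp hmem).1
  calc |Real.sign (x 0) * Real.sign (x 1) * S|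
      = |Real.sign (x 0)| * |Real.sign (x 1)| * |S| := by rw [abs_mul, abs_mul]
    _ ≤ 1 * 1 * |S| := by
        apply mul_le_mul_of_nonneg_right _ (abs_nonneg S)
        exact mul_le_mul (abs_sign_le _) (abs_sign_le _) (abs_nonneg _) zero_le_one
    _ = |S| := by ring
    _ ≤ _ := hbS

lemma same_sign {u v : ℝ} (h : |u - v| < |u|) :
    Real.sign u = Real.sign v ∧ (|u| - |v|) ^ 2 = (u - v) ^ 2 := by
  rcases lt_trichotomy u 0 with hu | hu | hu
  · rw [abs_of_neg hu] at h
    have h2 := abs_lt.mp h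
    have hv : v < 0 := by linarith [h2.1]
    refine ⟨by rw [Real.sign_of_neg hu, Real.sign_of_neg hv], ?_⟩
    rw [abs_of_neg hu, abs_of_neg hv]; ring
  · exfalso; rw [hu, abs_zero] at h; linarith [abs_nonneg ((0:ℝ) - v)]
  · rw [abs_of_pos hu] at h
    have h2 := abs_lt.mp h
    have hv : 0 < v := by linarith [h2.2]
    refine ⟨by rw [Real.sign_of_pos hu, Real.sign_of_pos hv], ?_⟩
    rw [abs_of_pos hu, abs_of_pos hv]


lemma thetaLoc_def (α : ℝ) (φ : R2 → ℝ) (n : ℕ) (x : R2) :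
    thetaLoc α φ n x
      = (4:ℝ) ^ (-(α * (n:ℝ))) * φ ((4:ℝ) ^ (n:ℕ) • (x - mk2 (sc n) (sc n))) := rfl

lemma theta_lip {α β : ℝ} {φ : R2 → ℝ} (hα1 : α ≤ 1) (hβ : 0 ≤ β)
    (hout : ∀ x : R2, 1/32 ≤ ‖x‖ → φ x = 0)
    {L : ℝ} (hL0 : 0 ≤ L) (hLip : ∀ z w : R2, |φ z - φ w| ≤ L * ‖z - w‖)
    {n₀ N n : ℕ} (h1 : 1 ≤ n₀) (hmem : n ∈ Finset.Icc n₀ N) {x y : R2}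
    (hbub : thetaLoc α φ n (mk2 |x 0| |x 1|) ≠ 0)
    (hclose : ‖x - y‖ < sc n / 8) :
    |thetaData α β φ n₀ N x - thetaData α β φ n₀ N y|
      ≤ L * ((n₀:ℝ)) ^ (-β) * ‖x - y‖ ^ α := by
  rcases eq_or_ne x y with rfl | hxy
  · rw [sub_self, abs_zero]
    have : (0:ℝ) ≤ ((n₀:ℝ)) ^ (-β) * ‖x - x‖ ^ α :=
      mul_nonneg (Real.rpow_nonneg (Nat.cast_nonneg _) _)
        (Real.rpow_nonneg (norm_nonneg _) _)
    nlinarith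
  have hrpos : 0 < ‖x - y‖ := by rwa [norm_sub_pos_iff]
  set r := ‖x - y‖ with hrdef
  set X := mk2 |x 0| |x 1| with hXdef
  set Y := mk2 |y 0| |y 1| with hYdef
  have hXc : ∀ i : Fin 2, X i = |x i| := by intro i; fin_cases i <;> rfl
  have hcoord : ∀ i : Fin 2, |x i - y i| ≤ r := fun i => coord_abs_le_norm (x - y) i
  have hXmem := fun i => bubble_mem hout hbub i
  have hsgn : ∀ i : Fin 2, |x i - y i| < |x i| := by
    intro i
    have h2 := (hXmem i).1
    rw [hXc i] at h2
    have h3 := hcoord i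
    have := sc_pos n
    linarith
  have hsame := fun i => same_sign (hsgn i)
  have hXY : ‖X - Y‖ = r := by
    rw [norm_eq2, hrdef, norm_eq2]
    have e0 : (X - Y) 0 = |x 0| - |y 0| := rfl
    have e1 : (X - Y) 1 = |x 1| - |y 1| := rfl
    have f0 : (x - y) 0 = x 0 - y 0 := rfl
    have f1 : (x - y) 1 = x 1 - y 1 := rfl
    rw [e0, e1, f0, f1, (hsame 0).2, (hsame 1).2]
  have hclose0 : |X 0 - Y 0| < sc n / 8 := by
    have he : |X 0 - Y 0| = abs (|x 0| - |y 0|) := rfl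
    rw [he]
    exact lt_of_le_of_lt ((abs_abs_sub_abs_le_abs_sub _ _).trans (hcoord 0)) hclose
  have hFX := sum_collapse (β := β) hout hmem hbub (Y := X)
    (by rw [sub_self, abs_zero]; exact div_pos (sc_pos n) (by norm_num))
  have hFY := sum_collapse (β := β) hout hmem hbub hclose0
  have h4 : (0:ℝ) < (4:ℝ) ^ (n:ℕ) := by positivity
  have hT : |thetaLoc α φ n X - thetaLoc α φ n Y| ≤ L * r ^ α := by
    rw [thetaLoc_def, thetaLoc_def, ← mul_sub, abs_mul,
      abs_of_nonneg (Real.rpow_nonneg (by norm_num : (0:ℝ) ≤ 4) _)]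
    have hzz : ((4:ℝ) ^ (n:ℕ) • (X - mk2 (sc n) (sc n)))
        - ((4:ℝ) ^ (n:ℕ) • (Y - mk2 (sc n) (sc n))) = (4:ℝ) ^ (n:ℕ) • (X - Y) := by
      rw [← smul_sub]
      congr 1
      abel
    have hφd := hLip ((4:ℝ) ^ (n:ℕ) • (X - mk2 (sc n) (sc n)))
      ((4:ℝ) ^ (n:ℕ) • (Y - mk2 (sc n) (sc n)))
    rw [hzz, norm_smul, Real.norm_eq_abs, abs_of_pos h4, hXY] at hφd
    have ht0 : 0 < (4:ℝ)^(n:ℕ) * r := mul_pos h4 hrpos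
    have ht1 : (4:ℝ)^(n:ℕ) * r ≤ 1 := by
      have hs := pow_mul_sc n
      nlinarith
    have hta : (4:ℝ)^(n:ℕ) * r ≤ ((4:ℝ)^(n:ℕ) * r) ^ α := by
      nth_rewrite 1 [← Real.rpow_one ((4:ℝ)^(n:ℕ) * r)]
      exact Real.rpow_le_rpow_of_exponent_ge ht0 ht1 hα1
    have hsplit : (((4:ℝ)^(n:ℕ) * r)) ^ α = (4:ℝ)^((n:ℝ) * α) * r ^ α := by
      rw [Real.mul_rpow (le_of_lt h4) (le_of_lt hrpos), ← Real.rpow_natCast 4 n,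
        ← Real.rpow_mul (by norm_num : (0:ℝ) ≤ 4)]
    have hcancel : (4:ℝ) ^ (-(α * (n:ℝ))) * (4:ℝ) ^ ((n:ℝ) * α) = 1 := by
      rw [← Real.rpow_add (by norm_num : (0:ℝ) < 4),
        show -(α * (n:ℝ)) + (n:ℝ) * α = 0 by ring, Real.rpow_zero]
    have key : |φ ((4:ℝ) ^ (n:ℕ) • (X - mk2 (sc n) (sc n)))
        - φ ((4:ℝ) ^ (n:ℕ) • (Y - mk2 (sc n) (sc n)))|
        ≤ L * ((4:ℝ)^((n:ℝ) * α) * r ^ α) := by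
      refine hφd.trans ?_
      rw [← hsplit]
      exact mul_le_mul_of_nonneg_left hta hL0
    calc (4:ℝ) ^ (-(α * (n:ℝ))) * |φ ((4:ℝ) ^ (n:ℕ) • (X - mk2 (sc n) (sc n)))
          - φ ((4:ℝ) ^ (n:ℕ) • (Y - mk2 (sc n) (sc n)))|
        ≤ (4:ℝ) ^ (-(α * (n:ℝ))) * (L * ((4:ℝ)^((n:ℝ) * α) * r ^ α)) :=
          mul_le_mul_of_nonneg_left key (Real.rpow_nonneg (by norm_num) _)
      _ = ((4:ℝ) ^ (-(α * (n:ℝ))) * (4:ℝ) ^ ((n:ℝ) * α)) * (L * r ^ α) := by ring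
      _ = L * r ^ α := by rw [hcancel, one_mul]
  rw [thetaData_eq, thetaData_eq, ← hXdef, ← hYdef, hFX, hFY,
    ← (hsame 0).1, ← (hsame 1).1]
  have hfact : Real.sign (x 0) * Real.sign (x 1) * (((n:ℝ))^(-β) * thetaLoc α φ n X)
      - Real.sign (x 0) * Real.sign (x 1) * (((n:ℝ))^(-β) * thetaLoc α φ n Y)
      = (Real.sign (x 0) * Real.sign (x 1))
        * (((n:ℝ))^(-β) * (thetaLoc α φ n X - thetaLoc α φ n Y)) := by ring
  rw [hfact, abs_mul, abs_mul, abs_mul]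
  have hsg : |Real.sign (x 0)| * |Real.sign (x 1)| ≤ 1 := by
    have := mul_le_mul (abs_sign_le (x 0)) (abs_sign_le (x 1)) (abs_nonneg _) zero_le_one
    linarith
  have hnb : |((n:ℝ))^(-β)| = ((n:ℝ))^(-β) :=
    abs_of_nonneg (Real.rpow_nonneg (Nat.cast_nonneg n) _)
  have hn₀n : n₀ ≤ n := (Finset.mem_Icc.mp hmem).1
  calc |Real.sign (x 0)| * |Real.sign (x 1)|
        * (|((n:ℝ))^(-β)| * |thetaLoc α φ n X - thetaLoc α φ n Y|)
      ≤ 1 * (|((n:ℝ))^(-β)| * |thetaLoc α φ n X - thetaLoc α φ n Y|) :=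
        mul_le_mul_of_nonneg_right hsg (by positivity)
    _ = ((n:ℝ))^(-β) * |thetaLoc α φ n X - thetaLoc α φ n Y| := by rw [one_mul, hnb]
    _ ≤ ((n:ℝ))^(-β) * (L * r ^ α) :=
        mul_le_mul_of_nonneg_left hT (Real.rpow_nonneg (Nat.cast_nonneg n) _)
    _ ≤ ((n₀:ℝ))^(-β) * (L * r ^ α) :=
        mul_le_mul_of_nonneg_right (nbeta_le hβ h1 hn₀n)
          (mul_nonneg hL0 (Real.rpow_nonneg hrpos.le _))
    _ = L * ((n₀:ℝ))^(-β) * r ^ α := by ring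


lemma theta_pt {α β : ℝ} {φ : R2 → ℝ} (hα : 0 < α) (hα1 : α ≤ 1) (hβ : 0 ≤ β)
    (hrange : ∀ x, 0 ≤ φ x ∧ φ x ≤ 1) (hout : ∀ x : R2, 1/32 ≤ ‖x‖ → φ x = 0)
    {n₀ N n : ℕ} (h1 : 1 ≤ n₀) (hmem : n ∈ Finset.Icc n₀ N) {x : R2}
    (hbub : thetaLoc α φ n (mk2 |x 0| |x 1|) ≠ 0) {r : ℝ} (hfar : sc n / 8 ≤ r) :
    |thetaData α β φ n₀ N x| ≤ 128 * ((n₀:ℝ)) ^ (-β) * r ^ α := by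
  have hrpos : 0 < r := lt_of_lt_of_le (div_pos (sc_pos n) (by norm_num)) hfar
  set X := mk2 |x 0| |x 1| with hXdef
  rw [thetaData_eq, ← hXdef]
  have hFX := sum_collapse (β := β) hout hmem hbub (Y := X)
    (by rw [sub_self, abs_zero]; exact div_pos (sc_pos n) (by norm_num))
  rw [hFX, abs_mul, abs_mul, abs_mul]
  -- bound the bubble amplitude by 128 r^α
  have hamp : (4:ℝ) ^ (-(α * (n:ℝ))) ≤ 128 * r ^ α := by
    have hstep1 : (4:ℝ) ^ (-(α * (n:ℝ))) = ((4:ℝ) ^ (-(n:ℝ))) ^ α := by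
      rw [← Real.rpow_mul (by norm_num : (0:ℝ) ≤ 4),
        show (-(n:ℝ)) * α = -(α * (n:ℝ)) by ring]
    have hsc : (4:ℝ) ^ (-(n:ℝ)) = 16 * sc n := by
      rw [sc, show -(n:ℝ) = (-(n:ℝ) - 2) + 2 by ring,
        Real.rpow_add (by norm_num : (0:ℝ) < 4),
        show ((2:ℝ) = ((2:ℕ):ℝ)) by norm_num, Real.rpow_natCast]
      norm_num
      ring
    have hle : (4:ℝ) ^ (-(n:ℝ)) ≤ 128 * r := by rw [hsc]; linarith
    have h2 : ((4:ℝ) ^ (-(n:ℝ))) ^ α ≤ (128 * r) ^ α :=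
      Real.rpow_le_rpow (Real.rpow_nonneg (by norm_num) _) hle hα.le
    have h3 : ((128:ℝ) * r) ^ α = (128:ℝ) ^ α * r ^ α :=
      Real.mul_rpow (by norm_num) hrpos.le
    have h4 : (128:ℝ) ^ α ≤ 128 := by
      calc (128:ℝ) ^ α ≤ (128:ℝ) ^ (1:ℝ) :=
            Real.rpow_le_rpow_of_exponent_le (by norm_num) hα1
        _ = 128 := Real.rpow_one _
    have h5 : (0:ℝ) ≤ r ^ α := Real.rpow_nonneg hrpos.le _
    rw [hstep1]
    calc ((4:ℝ) ^ (-(n:ℝ))) ^ α ≤ (128 * r) ^ α := h2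
      _ = (128:ℝ) ^ α * r ^ α := h3
      _ ≤ 128 * r ^ α := mul_le_mul_of_nonneg_right h4 h5
  have hnb : |((n:ℝ))^(-β)| = ((n:ℝ))^(-β) :=
    abs_of_nonneg (Real.rpow_nonneg (Nat.cast_nonneg n) _)
  have hn₀n : n₀ ≤ n := (Finset.mem_Icc.mp hmem).1
  have hsg : |Real.sign (x 0)| * |Real.sign (x 1)| ≤ 1 := by
    have := mul_le_mul (abs_sign_le (x 0)) (abs_sign_le (x 1)) (abs_nonneg _) zero_le_one
    linarith
  calc |Real.sign (x 0)| * |Real.sign (x 1)| * (|((n:ℝ))^(-β)| * |thetaLoc α φ n X|)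
      ≤ 1 * (|((n:ℝ))^(-β)| * |thetaLoc α φ n X|) :=
        mul_le_mul_of_nonneg_right hsg (by positivity)
    _ = ((n:ℝ))^(-β) * |thetaLoc α φ n X| := by rw [one_mul, hnb]
    _ ≤ ((n:ℝ))^(-β) * (128 * r ^ α) := by
        apply mul_le_mul_of_nonneg_left _ (Real.rpow_nonneg (Nat.cast_nonneg n) _)
        exact (thetaLoc_abs_le hrange n X).trans hamp
    _ ≤ ((n₀:ℝ))^(-β) * (128 * r ^ α) := by
        apply mul_le_mul_of_nonneg_right (nbeta_le hβ h1 hn₀n)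
        positivity
    _ = 128 * ((n₀:ℝ)) ^ (-β) * r ^ α := by ring

lemma theta_one {α β : ℝ} {φ : R2 → ℝ} (hα : 0 < α) (hα1 : α ≤ 1) (hβ : 0 ≤ β)
    (hrange : ∀ x, 0 ≤ φ x ∧ φ x ≤ 1) (hout : ∀ x : R2, 1/32 ≤ ‖x‖ → φ x = 0)
    {L : ℝ} (hL0 : 0 ≤ L) (hLip : ∀ z w : R2, |φ z - φ w| ≤ L * ‖z - w‖)
    {n₀ N : ℕ} (h1 : 1 ≤ n₀) (x y : R2) (hx : thetaData α β φ n₀ N x ≠ 0) :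
    |thetaData α β φ n₀ N x - thetaData α β φ n₀ N y|
      ≤ (256 + L) * ((n₀:ℝ)) ^ (-β) * ‖x - y‖ ^ α := by
  have hra : (0:ℝ) ≤ ((n₀:ℝ)) ^ (-β) * ‖x - y‖ ^ α :=
    mul_nonneg (Real.rpow_nonneg (Nat.cast_nonneg _) _) (Real.rpow_nonneg (norm_nonneg _) _)
  -- extract the bubble of x
  have hS : (∑ n ∈ Finset.Icc n₀ N, ((n : ℝ) ^ (-β)) * thetaLoc α φ n (mk2 |x 0| |x 1|)) ≠ 0 := by
    intro h0
    exact hx (by rw [thetaData_eq, h0, mul_zero])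
  obtain ⟨n, hmem, hne⟩ := Finset.exists_ne_zero_of_sum_ne_zero hS
  have hbub : thetaLoc α φ n (mk2 |x 0| |x 1|) ≠ 0 := fun h => hne (by rw [h, mul_zero])
  by_cases hcl : ‖x - y‖ < sc n / 8
  · have := theta_lip hα1 hβ hout hL0 hLip h1 hmem hbub hcl
    nlinarith
  · push_neg at hcl
    have hxpt := theta_pt hα hα1 hβ hrange hout h1 hmem hbub hcl
    by_cases hy : thetaData α β φ n₀ N y = 0
    · rw [hy, sub_zero]
      nlinarith
    · have hSy : (∑ n ∈ Finset.Icc n₀ N,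
          ((n : ℝ) ^ (-β)) * thetaLoc α φ n (mk2 |y 0| |y 1|)) ≠ 0 := by
        intro h0
        exact hy (by rw [thetaData_eq, h0, mul_zero])
      obtain ⟨m, hmemm, hnem⟩ := Finset.exists_ne_zero_of_sum_ne_zero hSy
      have hbuby : thetaLoc α φ m (mk2 |y 0| |y 1|) ≠ 0 := fun h => hnem (by rw [h, mul_zero])
      by_cases hcl2 : ‖y - x‖ < sc m / 8
      · have := theta_lip hα1 hβ hout hL0 hLip h1 hmemm hbuby hcl2
        rw [abs_sub_comm, norm_sub_rev] at this
        nlinarith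
      · push_neg at hcl2
        rw [norm_sub_rev] at hcl2
        have hypt := theta_pt hα hα1 hβ hrange hout h1 hmemm hbuby hcl2
        have htri : |thetaData α β φ n₀ N x - thetaData α β φ n₀ N y|
            ≤ |thetaData α β φ n₀ N x| + |thetaData α β φ n₀ N y| := abs_sub _ _
        nlinarith

lemma theta_main {α β : ℝ} {φ : R2 → ℝ} (hα : 0 < α) (hα1 : α ≤ 1) (hβ : 0 ≤ β)
    (hrange : ∀ x, 0 ≤ φ x ∧ φ x ≤ 1) (hout : ∀ x : R2, 1/32 ≤ ‖x‖ → φ x = 0)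
    {L : ℝ} (hL0 : 0 ≤ L) (hLip : ∀ z w : R2, |φ z - φ w| ≤ L * ‖z - w‖)
    {n₀ N : ℕ} (h1 : 1 ≤ n₀) (x y : R2) :
    |thetaData α β φ n₀ N x - thetaData α β φ n₀ N y|
      ≤ (256 + L) * ((n₀:ℝ)) ^ (-β) * ‖x - y‖ ^ α := by
  by_cases hx : thetaData α β φ n₀ N x = 0
  · by_cases hy : thetaData α β φ n₀ N y = 0
    · rw [hx, hy, sub_self, abs_zero]
      have : (0:ℝ) ≤ ((n₀:ℝ)) ^ (-β) * ‖x - y‖ ^ α :=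
        mul_nonneg (Real.rpow_nonneg (Nat.cast_nonneg _) _) (Real.rpow_nonneg (norm_nonneg _) _)
      nlinarith
    · rw [abs_sub_comm]
      rw [show ‖x - y‖ = ‖y - x‖ from (norm_sub_rev x y)]
      exact theta_one hα hα1 hβ hrange hout hL0 hLip h1 y x hy
  · exact theta_one hα hα1 hβ hrange hout hL0 hLip h1 x y hx

end InitAux

/-- **Smallness of the initial data (inequality (4.2)).**  For every `ε > 0` one can choose
`n₀ ≥ 1` so that `‖θ₀^{(N)}‖_{C^{0,α}} < ε` for all `N ≥ n₀`. -/
theorem initial_data_small (α β : ℝ) (hα : α ∈ Set.Ioo (0:ℝ) 1)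
    (hβ : β ∈ Set.Ioo (0:ℝ) (1/4)) (φ : R2 → ℝ) (hsm : ContDiff ℝ (⊤ : ℕ∞) φ)
    (hrad : ∀ x y : R2, ‖x‖ = ‖y‖ → φ x = φ y)
    (hrange : ∀ x, 0 ≤ φ x ∧ φ x ≤ 1)
    (hin : ∀ x : R2, ‖x‖ < 1/64 → φ x = 1)
    (hout : ∀ x : R2, 1/32 ≤ ‖x‖ → φ x = 0) :
    ∀ ε > 0, ∃ n₀ : ℕ, 1 ≤ n₀ ∧ ∀ N : ℕ, n₀ ≤ N →
      holderNorm α (thetaData α β φ n₀ N) < ε := by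
  obtain ⟨hα0, hα1⟩ := hα
  obtain ⟨hβ0, -⟩ := hβ
  have hcs : HasCompactSupport φ :=
    HasCompactSupport.intro (isCompact_closedBall (0:R2) (1/32))
      (fun x hx => hout x (le_of_lt
        (by rwa [Metric.mem_closedBall, dist_zero_right, not_le] at hx)))
  obtain ⟨K, hK⟩ := ContDiff.lipschitzWith_of_hasCompactSupport hcs hsm (by simp)
  set L : ℝ := (K : ℝ) with hLdef
  have hL0 : 0 ≤ L := K.coe_nonneg
  have hLip : ∀ z w : R2, |φ z - φ w| ≤ L * ‖z - w‖ := by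
    intro z w
    have := hK.dist_le_mul z w
    rwa [Real.dist_eq, dist_eq_norm] at this
  intro ε hε
  have hM : (0:ℝ) < 257 + L := by linarith
  have htend : Tendsto (fun n : ℕ => ((n:ℝ)) ^ (-β)) atTop (𝓝 0) :=
    (tendsto_rpow_neg_atTop hβ0).comp tendsto_natCast_atTop_atTop
  have hev : ∀ᶠ n : ℕ in atTop, ((n:ℝ)) ^ (-β) < ε / (257 + L) :=
    htend.eventually (gt_mem_nhds (div_pos hε hM))
  obtain ⟨n₁, hn₁⟩ := Filter.eventually_atTop.mp hev
  refine ⟨max n₁ 1, le_max_right _ _, fun N hN => ?_⟩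
  set n₀ := max n₁ 1 with hn₀def
  have h1 : 1 ≤ n₀ := le_max_right _ _
  have hsmall : ((n₀:ℝ)) ^ (-β) < ε / (257 + L) := hn₁ _ (le_max_left _ _)
  have hsup : supNorm (thetaData α β φ n₀ N) ≤ ((n₀:ℝ)) ^ (-β) :=
    ciSup_le (fun x => InitAux.theta_sup hα0.le hβ0.le hrange hout h1 x)
  have hsemi : holderSemi α (thetaData α β φ n₀ N) ≤ (256 + L) * ((n₀:ℝ)) ^ (-β) := by
    have hne : (mk2 1 0 : R2) ≠ mk2 0 0 := by
      intro h
      have h2 : (mk2 1 0 : R2) 0 = (mk2 0 0 : R2) 0 := by rw [h]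
      have h3 : (1:ℝ) = 0 := h2
      norm_num at h3
    have : Nonempty {q : R2 × R2 // q.1 ≠ q.2} := ⟨⟨(mk2 1 0, mk2 0 0), hne⟩⟩
    apply ciSup_le
    rintro ⟨⟨u, v⟩, huv⟩
    have hpos : (0:ℝ) < ‖u - v‖ ^ α :=
      Real.rpow_pos_of_pos (norm_sub_pos_iff.mpr huv) α
    rw [div_le_iff₀ hpos]
    exact InitAux.theta_main hα0 hα1.le hβ0.le hrange hout hL0 hLip h1 u v
  rw [holderNorm]
  have hnb : (0:ℝ) ≤ ((n₀:ℝ)) ^ (-β) := Real.rpow_nonneg (Nat.cast_nonneg _) _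
  calc supNorm (thetaData α β φ n₀ N) + holderSemi α (thetaData α β φ n₀ N)
      ≤ (257 + L) * ((n₀:ℝ)) ^ (-β) := by nlinarith
    _ < (257 + L) * (ε / (257 + L)) := mul_lt_mul_of_pos_left hsmall hM
    _ = ε := by field_simp
end
end
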